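/- Let B ∈ ℂ^{n×n} be Hermitian positive definite, T ∈ ℂ^{n×n} invertible, D = (T^{-1})* B T^{-1}, and let D' = D ⊙ I be the diagonal matrix of diagonal entries of D (which are positive). If ‖D'^{-1/2} (T^{-1})* B T^{-1} D'^{-1/2} − I‖_F ≤ η for some 0 ≤ η < 1, then ‖B − T* D' T‖_F ≤ ‖B‖ · η/(1 − η), where ‖·‖ is the ℓ₂ operator norm and ‖·‖_F the Frobenius norm. -/

import Mathlib

/-! With `M = D'^{1/2} T` the hypothesis reads `(M⁻¹)ᴴ B M⁻¹ = 1 + F` with `‖F‖_F ≤ η`, and the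
error is `B - Tᴴ D' T = B - Mᴴ M = Mᴴ F M`, so `‖B - Tᴴ D' T‖_F ≤ ‖M‖² η`. The C*-identity gives
`‖M‖² = ‖Mᴴ M‖ = ‖B - Mᴴ F M‖ ≤ ‖B‖ + η ‖M‖²`, i.e. `‖M‖² ≤ ‖B‖ / (1 - η)`. -/

open Matrix
open scoped ComplexOrder

noncomputable section


/-- The `ℓ₂` operator norm of a matrix. -/
def opNorm {m n : ℕ} (M : Matrix (Fin m) (Fin n) ℂ) : ℝ :=
  ‖LinearMap.toContinuousLinearMap (Matrix.toEuclideanLin M)‖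

/-- The condition number `κ(M) = ‖M‖·‖M⁻¹‖` in the `ℓ₂` operator norm. -/
def kappa {n : ℕ} (M : Matrix (Fin n) (Fin n) ℂ) : ℝ :=
  opNorm M * opNorm M⁻¹

/-- The Frobenius norm of a matrix. -/
def frobNorm {n : ℕ} (M : Matrix (Fin n) (Fin n) ℂ) : ℝ :=
  Real.sqrt (∑ i, ∑ j, ‖M i j‖ ^ 2)

/-- `D^{-1/2}`: the inverse of the diagonal matrix of square roots of diagonal entries. -/
def invSqrtDiag {n : ℕ} (D : Matrix (Fin n) (Fin n) ℂ) : Matrix (Fin n) (Fin n) ℂ :=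
  (Matrix.diagonal fun i => (Real.sqrt (D i i).re : ℂ))⁻¹

section Frobenius

attribute [local instance] Matrix.frobeniusNormedAddCommGroup

variable {n : ℕ}

lemma frobNorm_nonneg (A : Matrix (Fin n) (Fin n) ℂ) : 0 ≤ frobNorm A :=
  Real.sqrt_nonneg _

lemma frobNorm_eq_frobenius_norm (A : Matrix (Fin n) (Fin n) ℂ) :
    frobNorm A = ‖A‖ := by
  rw [Matrix.frobenius_norm_def, frobNorm, Real.sqrt_eq_rpow]
  simp only [Real.rpow_two]

lemma opNorm_le_frobNorm (A : Matrix (Fin n) (Fin n) ℂ) : opNorm A ≤ frobNorm A := by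
  refine ContinuousLinearMap.opNorm_le_bound _ (frobNorm_nonneg A) fun x => ?_
  calc ‖toEuclideanLin A x‖ = ‖replicateCol Unit (A *ᵥ x)‖ := by
        rw [frobenius_norm_replicateCol]; rfl
    _ ≤ ‖A‖ * ‖replicateCol Unit x.ofLp‖ := by
        rw [replicateCol_mulVec]; exact frobenius_norm_mul _ _
    _ = frobNorm A * ‖x‖ := by
        rw [frobenius_norm_replicateCol, frobNorm_eq_frobenius_norm]

end Frobenius

open scoped Matrix.Norms.L2Operator

section Norms

variable {m n : ℕ}

lemma opNorm_eq_norm (A : Matrix (Fin m) (Fin n) ℂ) : opNorm A = ‖A‖ := rfl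

lemma frobNorm_sq_eq_sum_col (A : Matrix (Fin n) (Fin n) ℂ) :
    frobNorm A ^ 2 = ∑ j, ‖WithLp.toLp 2 (Aᵀ j)‖ ^ 2 := by
  rw [frobNorm, Real.sq_sqrt (by positivity), Finset.sum_comm]
  simp only [EuclideanSpace.norm_sq_eq, transpose_apply]

lemma frobNorm_conjTranspose (A : Matrix (Fin n) (Fin n) ℂ) : frobNorm Aᴴ = frobNorm A := by
  rw [frobNorm, frobNorm, Finset.sum_comm]
  simp [conjTranspose_apply]

lemma frobNorm_mul_le_opNorm_mul (A X : Matrix (Fin n) (Fin n) ℂ) :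
    frobNorm (A * X) ≤ opNorm A * frobNorm X := by
  refine (pow_le_pow_iff_left₀ (frobNorm_nonneg _)
    (mul_nonneg (norm_nonneg _) (frobNorm_nonneg _)) two_ne_zero).1 ?_
  rw [mul_pow, frobNorm_sq_eq_sum_col, frobNorm_sq_eq_sum_col, Finset.mul_sum]
  refine Finset.sum_le_sum fun j _ => ?_
  have hcol : (A * X)ᵀ j = A *ᵥ Xᵀ j := by
    ext i; simp [mul_apply, mulVec, dotProduct]
  rw [hcol, ← mul_pow]
  gcongr
  exact A.l2_opNorm_mulVec (WithLp.toLp 2 (Xᵀ j))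

lemma frobNorm_mul_le_mul_opNorm (X A : Matrix (Fin n) (Fin n) ℂ) :
    frobNorm (X * A) ≤ frobNorm X * opNorm A := by
  rw [← frobNorm_conjTranspose, conjTranspose_mul, ← frobNorm_conjTranspose X, mul_comm,
    opNorm_eq_norm, ← l2_opNorm_conjTranspose]
  exact frobNorm_mul_le_opNorm_mul _ _

lemma frobNorm_conjTranspose_mul_mul_le (M F : Matrix (Fin n) (Fin n) ℂ) :
    frobNorm (Mᴴ * F * M) ≤ opNorm M ^ 2 * frobNorm F := by
  calc frobNorm (Mᴴ * F * M) ≤ opNorm Mᴴ * frobNorm F * opNorm M :=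
        (frobNorm_mul_le_mul_opNorm _ _).trans <|
          mul_le_mul_of_nonneg_right (frobNorm_mul_le_opNorm_mul _ _) (norm_nonneg _)
    _ = opNorm M ^ 2 * frobNorm F := by
        rw [opNorm_eq_norm, opNorm_eq_norm, l2_opNorm_conjTranspose]; ring

end Norms

section Perturbation

variable {n : ℕ}

lemma opNorm_sq_le_of_frobNorm_sub_one_le {B M G : Matrix (Fin n) (Fin n) ℂ} {η : ℝ}
    (hB : B = Mᴴ * G * M) (hG : frobNorm (G - 1) ≤ η) :
    (1 - η) * opNorm M ^ 2 ≤ opNorm B := by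
  have hsplit : Mᴴ * M = B - Mᴴ * (G - 1) * M := by rw [hB]; noncomm_ring
  have hE : opNorm (Mᴴ * (G - 1) * M) ≤ opNorm M ^ 2 * η :=
    (opNorm_le_frobNorm _).trans <| (frobNorm_conjTranspose_mul_mul_le _ _).trans <|
      mul_le_mul_of_nonneg_left hG (sq_nonneg _)
  have hM : opNorm M ^ 2 ≤ opNorm B + opNorm M ^ 2 * η := by
    calc opNorm M ^ 2 = opNorm (Mᴴ * M) := by
          rw [opNorm_eq_norm, opNorm_eq_norm, l2_opNorm_conjTranspose_mul_self, sq]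
      _ ≤ opNorm B + opNorm (Mᴴ * (G - 1) * M) := hsplit ▸ norm_sub_le B _
      _ ≤ opNorm B + opNorm M ^ 2 * η := by gcongr
  linarith

lemma conjTranspose_mul_conjTranspose_inv_mul_mul_inv_mul {M : Matrix (Fin n) (Fin n) ℂ}
    (hM : IsUnit M.det) (B : Matrix (Fin n) (Fin n) ℂ) :
    Mᴴ * ((M⁻¹)ᴴ * B * M⁻¹) * M = B := by
  have hMH : IsUnit Mᴴ.det := by rw [det_conjTranspose]; exact hM.star
  rw [conjTranspose_nonsing_inv]
  simp only [Matrix.mul_assoc, mul_nonsing_inv_cancel_left _ _ hMH, nonsing_inv_mul _ hM,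
    Matrix.mul_one]

theorem frobNorm_sub_conjTranspose_mul_self_le {B M : Matrix (Fin n) (Fin n) ℂ} {η : ℝ}
    (hM : IsUnit M.det) (hclose : frobNorm ((M⁻¹)ᴴ * B * M⁻¹ - 1) ≤ η) (hη : η < 1) :
    frobNorm (B - Mᴴ * M) ≤ opNorm B * (η / (1 - η)) := by
  set G := (M⁻¹)ᴴ * B * M⁻¹
  have hB : B = Mᴴ * G * M := (conjTranspose_mul_conjTranspose_inv_mul_mul_inv_mul hM B).symm
  have hη0 : 0 ≤ η := (frobNorm_nonneg _).trans hclose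
  have hM2 : opNorm M ^ 2 ≤ opNorm B / (1 - η) := by
    rw [le_div_iff₀ (by linarith), mul_comm]
    exact opNorm_sq_le_of_frobNorm_sub_one_le hB hclose
  have hE : B - Mᴴ * M = Mᴴ * (G - 1) * M := by nth_rw 1 [hB]; noncomm_ring
  calc frobNorm (B - Mᴴ * M) ≤ opNorm M ^ 2 * η :=
        hE ▸ (frobNorm_conjTranspose_mul_mul_le _ _).trans
          (mul_le_mul_of_nonneg_left hclose (sq_nonneg _))
    _ ≤ opNorm B / (1 - η) * η := by gcongr
    _ = opNorm B * (η / (1 - η)) := by ring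

end Perturbation

section SqrtDiag

variable {n : ℕ}

def sqrtDiag (D : Matrix (Fin n) (Fin n) ℂ) : Matrix (Fin n) (Fin n) ℂ :=
  diagonal fun i => (Real.sqrt (D i i).re : ℂ)

lemma invSqrtDiag_eq_inv_sqrtDiag (D : Matrix (Fin n) (Fin n) ℂ) :
    invSqrtDiag D = (sqrtDiag D)⁻¹ := rfl

lemma sqrtDiag_conjTranspose (D : Matrix (Fin n) (Fin n) ℂ) : (sqrtDiag D)ᴴ = sqrtDiag D := by
  simp [sqrtDiag, diagonal_conjTranspose]

lemma sqrtDiag_mul_self {D : Matrix (Fin n) (Fin n) ℂ} (hD : ∀ i, 0 ≤ D i i) :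
    sqrtDiag D * sqrtDiag D = diagonal fun i => D i i := by
  rw [sqrtDiag, diagonal_mul_diagonal]
  congr 1
  ext i
  obtain ⟨hre, him⟩ := Complex.nonneg_iff.1 (hD i)
  rw [← Complex.ofReal_mul, Real.mul_self_sqrt hre]
  exact Complex.ext rfl (by simp [him])

lemma isUnit_det_sqrtDiag {D : Matrix (Fin n) (Fin n) ℂ} (hD : ∀ i, 0 < D i i) :
    IsUnit (sqrtDiag D).det := by
  rw [sqrtDiag, det_diagonal, isUnit_iff_ne_zero, Finset.prod_ne_zero_iff]
  intro i _
  exact Complex.ofReal_ne_zero.2 (Real.sqrt_pos.2 (Complex.pos_iff.1 (hD i)).1).ne'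

end SqrtDiag

theorem frob_error_of_near_identity_general {n : ℕ} (B T : Matrix (Fin n) (Fin n) ℂ)
    (hB : B.PosDef) (hT : IsUnit T.det)
    (D D' : Matrix (Fin n) (Fin n) ℂ)
    (hD : D = (T⁻¹)ᴴ * B * T⁻¹)
    (hD' : D' = Matrix.diagonal fun i => D i i)
    (η : ℝ) (hη1 : η < 1)
    (hclose : frobNorm (invSqrtDiag D' * ((T⁻¹)ᴴ * B * T⁻¹) * invSqrtDiag D' - 1) ≤ η) :
    frobNorm (B - Tᴴ * D' * T) ≤ opNorm B * (η / (1 - η)) := by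
  have hDpos : D.PosDef := hD ▸ hB.conjTranspose_mul_mul_same
    (mulVec_injective_of_isUnit ((isUnit_iff_isUnit_det _).2 (isUnit_nonsing_inv_det T hT)))
  set S := sqrtDiag D
  have hSH : Sᴴ = S := sqrtDiag_conjTranspose D
  have hSS : S * S = D' := hD' ▸ sqrtDiag_mul_self fun _ => hDpos.diag_pos.le
  have hinv : invSqrtDiag D' = S⁻¹ := by
    simp [invSqrtDiag_eq_inv_sqrtDiag, S, sqrtDiag, hD']
  have hscaled : ((S * T)⁻¹)ᴴ * B * (S * T)⁻¹
      = invSqrtDiag D' * ((T⁻¹)ᴴ * B * T⁻¹) * invSqrtDiag D' := by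
    rw [hinv, Matrix.mul_inv_rev, conjTranspose_mul, conjTranspose_nonsing_inv S, hSH]
    simp only [Matrix.mul_assoc]
  have hgram : (S * T)ᴴ * (S * T) = Tᴴ * D' * T := by
    rw [← hSS, conjTranspose_mul, hSH]
    simp only [Matrix.mul_assoc]
  rw [← hgram]
  refine frobNorm_sub_conjTranspose_mul_self_le ?_ (hscaled ▸ hclose) hη1
  rw [det_mul]
  exact (isUnit_det_sqrtDiag fun _ => hDpos.diag_pos).mul hT

/-- for Hermitian positive definite `B`, invertible `T`,
`D = (T⁻¹)* B T⁻¹` and `D'` the diagonal part of `D`, if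
`‖D'^{-1/2} (T⁻¹)* B T⁻¹ D'^{-1/2} − I‖_F ≤ η < 1` then
`‖B − T* D' T‖_F ≤ ‖B‖·η/(1 − η)`. -/
theorem frob_error_of_near_identity {n : ℕ} (B T : Matrix (Fin n) (Fin n) ℂ)
    (hB : B.PosDef) (hT : IsUnit T.det)
    (D D' : Matrix (Fin n) (Fin n) ℂ)
    (hD : D = (T⁻¹)ᴴ * B * T⁻¹)
    (hD' : D' = Matrix.diagonal fun i => D i i)
    (η : ℝ) (hη0 : 0 ≤ η) (hη1 : η < 1)
    (hclose : frobNorm (invSqrtDiag D' * ((T⁻¹)ᴴ * B * T⁻¹) * invSqrtDiag D' - 1) ≤ η) :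
    frobNorm (B - Tᴴ * D' * T) ≤ opNorm B * (η / (1 - η)) :=
  frob_error_of_near_identity_general B T hB hT D D' hD hD' η hη1 hclose
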